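/- Let n be a positive integer and N a positive integer divisible by n, and set α = 1 + 1/n. Then the sequence L = (N/n, N/n, …, N/n) consisting of n+1 copies of N/n belongs to TFF(α, N), and every sequence L' ∈ TFF(α, N) satisfies L' ≼ L. In particular, L is the unique maximal element of TFF(α, N) with respect to majorization. -/

import Mathlib

/-!
For `α > 1` and an orthogonal projection `P`, the matrix `α • 1 - P` is invertible because the
spectrum of an idempotent lies in `{0, 1}`. In a tight fusion frame `α • 1 - P i = ∑_{j ≠ i} P j`,
so subadditivity of rank gives `N ≤ ∑_{j ≠ i} L j`; as `∑ L j = tr (α • 1) = N + N/n`, every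
`L i` is at most `N/n`, which bounds all partial sums of `L` by those of the constant sequence.

Conversely, `n + 1` unit vectors in `ℝⁿ` forming a tight frame with bound `1 + 1/n` give
rank-one projections summing to `(1 + 1/n) • 1`; tensoring them with the identity of
`ℝ^{N/n}` produces the sequence `(N/n, …, N/n)`.
-/

open Matrix
open scoped Kronecker

/-- `L` is a tight fusion frame (TFF) sequence for frame bound `α` in dimension `N`. -/
def IsTFF (N : ℕ) (α : ℝ) {K : ℕ} (L : Fin K → ℕ) : Prop :=
  ∃ P : Fin K → Matrix (Fin N) (Fin N) ℝ,
    (∀ i, P i * P i = P i) ∧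
    (∀ i, (P i)ᵀ = P i) ∧
    (∀ i, (P i).rank = L i) ∧
    (∑ i, P i) = α • (1 : Matrix (Fin N) (Fin N) ℝ)

/-- `Majorizes L L'` means `L ≼ L'`: the two sequences have equal total sums and the
partial sums of `L` are dominated by those of `L'` for all `k ≤ min K K'`. -/
def Majorizes {K K' : ℕ} (L : Fin K → ℕ) (L' : Fin K' → ℕ) : Prop :=
  (∑ i, L i = ∑ i, L' i) ∧
  ∀ k ≤ min K K',
    ∑ i ∈ Finset.univ.filter (fun i : Fin K => (i : ℕ) < k), L i ≤
      ∑ i ∈ Finset.univ.filter (fun i : Fin K' => (i : ℕ) < k), L' i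

namespace Matrix

variable {K m n : Type*} [Field K] [Fintype n]

theorem trace_eq_rank_of_isIdempotentElem [DecidableEq n] {P : Matrix n n K}
    (hP : IsIdempotentElem P) : P.trace = P.rank := by
  have hf : IsIdempotentElem P.toLin' := by
    rw [IsIdempotentElem, Module.End.mul_eq_comp, ← toLin'_mul, hP.eq]
  rw [← trace_toLin'_eq, (LinearMap.IsIdempotentElem.isProj_range _ hf).trace]
  rfl

theorem isUnit_smul_one_sub_of_isIdempotentElem [DecidableEq n] {P : Matrix n n K}
    (hP : IsIdempotentElem P) {a : K} (h₀ : a ≠ 0) (h₁ : a ≠ 1) : IsUnit (a • 1 - P) := by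
  rw [← Algebra.algebraMap_eq_smul_one, ← spectrum.notMem_iff]
  intro ha
  rcases hP.spectrum_subset K ha with h | h
  exacts [h₀ h, h₁ h]

theorem rank_add_le (A B : Matrix m n K) : (A + B).rank ≤ A.rank + B.rank := by
  have hrange : LinearMap.range (A + B).mulVecLin ≤
      LinearMap.range A.mulVecLin ⊔ LinearMap.range B.mulVecLin := by
    rintro _ ⟨v, rfl⟩
    rw [mulVecLin_add]
    exact Submodule.add_mem_sup (LinearMap.mem_range_self _ v) (LinearMap.mem_range_self _ v)
  exact (Submodule.finrank_mono hrange).trans (Submodule.finrank_add_le_finrank_add_finrank _ _)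

theorem rank_sum_le {ι : Type*} (s : Finset ι) (A : ι → Matrix m n K) :
    (∑ i ∈ s, A i).rank ≤ ∑ i ∈ s, (A i).rank := by
  induction s using Finset.cons_induction with
  | empty => simp
  | cons a s ha ih =>
    rw [Finset.sum_cons, Finset.sum_cons]
    exact (rank_add_le _ _).trans (Nat.add_le_add_left ih _)

end Matrix

theorem majorizes_const {K K' c : ℕ} {L : Fin K → ℕ} (hsum : ∑ i, L i = K' * c)
    (hle : ∀ i, L i ≤ c) : Majorizes L (fun _ : Fin K' => c) := by
  refine ⟨by simp [hsum], fun k hk => ?_⟩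
  calc ∑ i ∈ Finset.univ.filter (fun i : Fin K => (i : ℕ) < k), L i
      ≤ ∑ _i ∈ Finset.univ.filter (fun i : Fin K => (i : ℕ) < k), c :=
        Finset.sum_le_sum fun i _ => hle i
    _ = ∑ _i ∈ Finset.univ.filter (fun i : Fin K' => (i : ℕ) < k), c := by
      simp only [Finset.sum_const, Fin.card_filter_val_lt,
        min_eq_right (hk.trans (min_le_left _ _)), min_eq_right (hk.trans (min_le_right _ _))]

namespace IsTFF

variable {N K : ℕ} {α : ℝ} {L : Fin K → ℕ}

theorem sum_eq (h : IsTFF N α L) : (∑ i, L i : ℝ) = α * N := by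
  obtain ⟨P, hidem, -, hrank, hsum⟩ := h
  have htrace := congrArg trace hsum
  rw [trace_sum, trace_smul, trace_one, Fintype.card_fin, smul_eq_mul] at htrace
  rw [← htrace]
  exact Finset.sum_congr rfl fun i _ => by
    rw [← hrank i, trace_eq_rank_of_isIdempotentElem (hidem i)]

theorem add_le_sum (h : IsTFF N α L) (hα : 1 < α) (i : Fin K) : N + L i ≤ ∑ j, L j := by
  obtain ⟨P, hidem, -, hrank, hsum⟩ := h
  have hcompl : α • 1 - P i = ∑ j ∈ Finset.univ.erase i, P j := by
    rw [← hsum, ← Finset.add_sum_erase _ _ (Finset.mem_univ i), add_sub_cancel_left]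
  have hunit := isUnit_smul_one_sub_of_isIdempotentElem (hidem i) (by positivity) hα.ne'
  calc N + L i = (α • 1 - P i).rank + L i := by rw [rank_of_isUnit _ hunit, Fintype.card_fin]
    _ ≤ ∑ j ∈ Finset.univ.erase i, L j + L i := by
      rw [hcompl]
      gcongr
      exact (rank_sum_le _ _).trans_eq (Finset.sum_congr rfl fun j _ => hrank j)
    _ = ∑ j, L j := Finset.sum_erase_add _ _ (Finset.mem_univ i)

theorem kronecker_one (h : IsTFF N α L) (m : ℕ) : IsTFF (m * N) α (fun i => m * L i) := by
  obtain ⟨P, hidem, hsymm, hrank, hsum⟩ := h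
  let E := reindexAlgEquiv ℝ ℝ (finProdFinEquiv : Fin m × Fin N ≃ Fin (m * N))
  have hidem' (i : Fin K) : IsIdempotentElem ((1 : Matrix (Fin m) (Fin m) ℝ) ⊗ₖ P i) := by
    rw [IsIdempotentElem, ← mul_kronecker_mul, one_mul, hidem i]
  refine ⟨fun i => E (1 ⊗ₖ P i), fun i => by rw [← map_mul, (hidem' i).eq], fun i => ?_,
    fun i => ?_, ?_⟩
  · simp only [E, coe_reindexAlgEquiv, transpose_reindex, ← kroneckerMap_transpose,
      transpose_one, hsymm i]
  · have hrank' : (((1 : Matrix (Fin m) (Fin m) ℝ) ⊗ₖ P i).rank : ℝ) = m * L i := by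
      rw [← trace_eq_rank_of_isIdempotentElem (hidem' i), trace_kronecker, trace_one,
        trace_eq_rank_of_isIdempotentElem (hidem i), hrank i, Fintype.card_fin]
    simp only [E, coe_reindexAlgEquiv, rank_reindex]
    exact_mod_cast hrank'
  · have hkron : ∑ i, (1 : Matrix (Fin m) (Fin m) ℝ) ⊗ₖ P i = 1 ⊗ₖ ∑ i, P i :=
      (map_sum (kroneckerBilinear (R := ℝ) (1 : Matrix (Fin m) (Fin m) ℝ)) P _).symm
    rw [← map_sum, hkron, hsum, kronecker_smul, one_kronecker_one, map_smul, map_one]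

end IsTFF

theorem isTFF_const_one_of_unit_vectors {N K : ℕ} {α : ℝ} (u : Fin K → Fin N → ℝ)
    (hu : ∀ i, u i ⬝ᵥ u i = 1) (hsum : ∑ i, vecMulVec (u i) (u i) = α • 1) :
    IsTFF N α (fun _ : Fin K => 1) := by
  refine ⟨fun i => vecMulVec (u i) (u i), fun i => ?_, fun i => transpose_vecMulVec _ _,
    fun i => ?_, hsum⟩
  · rw [vecMulVec_mul_vecMulVec, hu i, one_smul]
  · have hidem : IsIdempotentElem (vecMulVec (u i) (u i)) := by
      rw [IsIdempotentElem, vecMulVec_mul_vecMulVec, hu i, one_smul]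
    have hrank := trace_eq_rank_of_isIdempotentElem hidem
    rw [trace_vecMulVec, hu i] at hrank
    exact_mod_cast hrank.symm

theorem sum_ite_add_mul_ite_add {n : ℕ} (a b : ℝ) (r s : Fin n) :
    ∑ x, ((if r = x then a else 0) + b) * ((if s = x then a else 0) + b) =
      (if r = s then a ^ 2 else 0) + 2 * a * b + n * b ^ 2 := by
  simp only [add_mul, mul_add, Finset.sum_add_distrib, ite_mul, mul_ite, zero_mul, mul_zero,
    Finset.sum_ite_eq, Finset.mem_univ, if_true, Finset.sum_const, Finset.card_univ,
    Fintype.card_fin, nsmul_eq_mul]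
  by_cases h : r = s
  · subst h
    simp only [if_true]
    ring
  · simp only [h, if_false]
    ring

/- The first `n` vectors are the rows of `a • 1 + b • J` (`J` the all-ones matrix), the last one
is constant `c`. With `a² = 1 + 1/n`, `c² = 1/n` and `b` a root of `n b² + 2ab + c² = 0`, the
all-ones parts of the frame operator cancel, leaving `a² • 1`. -/
theorem exists_unit_tight_frame {n : ℕ} (hn : 0 < n) :
    ∃ u : Fin (n + 1) → Fin n → ℝ,
      (∀ i, u i ⬝ᵥ u i = 1) ∧ ∑ i, vecMulVec (u i) (u i) = (1 + 1 / (n : ℝ)) • 1 := by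
  have hn' : (n : ℝ) ≠ 0 := by positivity
  obtain ⟨c, hc⟩ : ∃ c : ℝ, c ^ 2 = 1 / n := ⟨√(1 / n), Real.sq_sqrt (by positivity)⟩
  obtain ⟨a, ha⟩ : ∃ a : ℝ, a ^ 2 = 1 + c ^ 2 := ⟨√(1 + c ^ 2), Real.sq_sqrt (by positivity)⟩
  obtain ⟨b, hb⟩ : ∃ b : ℝ, n * b = c - a := ⟨(c - a) / n, mul_div_cancel₀ _ hn'⟩
  have hnc : n * c ^ 2 = 1 := by rw [hc, mul_one_div_cancel hn']
  have hb_root : 2 * a * b + n * b ^ 2 + c ^ 2 = 0 := mul_left_cancel₀ hn' <| by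
    linear_combination (a + n * b + c) * hb - ha + hnc
  refine ⟨Fin.lastCases (fun _ => c) (fun j x => (if x = j then a else 0) + b), fun i => ?_, ?_⟩
  · induction i using Fin.lastCases with
    | last =>
      simp only [Fin.lastCases_last, dotProduct, Finset.sum_const, Finset.card_univ,
        Fintype.card_fin, nsmul_eq_mul]
      linear_combination hnc
    | cast j =>
      simp only [Fin.lastCases_castSucc, dotProduct, @eq_comm _ _ j, sum_ite_add_mul_ite_add,
        if_true]
      linear_combination ha + hb_root
  · ext r s
    simp only [Matrix.sum_apply, Fin.sum_univ_castSucc, vecMulVec_apply, Fin.lastCases_castSucc,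
      Fin.lastCases_last, sum_ite_add_mul_ite_add, Matrix.smul_apply, one_apply, smul_eq_mul,
      mul_ite, mul_one, mul_zero]
    split_ifs
    · linear_combination ha + hb_root + hc
    · linear_combination hb_root

theorem isTFF_simplex {n : ℕ} (hn : 0 < n) :
    IsTFF n (1 + 1 / (n : ℝ)) (fun _ : Fin (n + 1) => 1) := by
  obtain ⟨u, hu, hsum⟩ := exists_unit_tight_frame hn
  exact isTFF_const_one_of_unit_vectors u hu hsum

theorem TFF_max_one_plus_inv_general (n N : ℕ) (hn : 0 < n) (hdvd : n ∣ N) :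
    IsTFF N (1 + 1 / (n : ℝ)) (fun _ : Fin (n + 1) => N / n) ∧
    ∀ (K : ℕ) (L' : Fin K → ℕ), Antitone L' → (∀ i, 0 < L' i) →
      IsTFF N (1 + 1 / (n : ℝ)) L' → Majorizes L' (fun _ : Fin (n + 1) => N / n) := by
  obtain ⟨m, rfl⟩ := hdvd
  rw [Nat.mul_div_cancel_left m hn]
  refine ⟨?_, fun K L' _ _ hL' => ?_⟩
  · simpa only [mul_one, mul_comm m n] using (isTFF_simplex hn).kronecker_one m
  · have hsum : ∑ i, L' i = (n + 1) * m := by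
      have hsum_real : ((∑ i, L' i : ℕ) : ℝ) = ((n + 1) * m : ℕ) := by
        rw [Nat.cast_sum, hL'.sum_eq]
        push_cast
        field_simp
      exact_mod_cast hsum_real
    have hα : 1 < 1 + 1 / (n : ℝ) := lt_add_of_pos_right 1 (by positivity)
    refine majorizes_const hsum fun i => Nat.le_of_add_le_add_left (a := n * m) ?_
    calc n * m + L' i ≤ ∑ j, L' j := hL'.add_le_sum hα i
      _ = n * m + m := by rw [hsum, add_one_mul]

/-- For `α = 1 + 1/n` with `n ∣ N`, the sequence of `n + 1` copies of `N/n` is the unique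
maximal element of `TFF(α, N)` with respect to majorization. -/
theorem TFF_max_one_plus_inv (n N : ℕ) (hn : 0 < n) (hN : 0 < N) (hdvd : n ∣ N) :
    IsTFF N (1 + 1 / (n : ℝ)) (fun _ : Fin (n + 1) => N / n) ∧
    ∀ (K : ℕ) (L' : Fin K → ℕ), Antitone L' → (∀ i, 0 < L' i) →
      IsTFF N (1 + 1 / (n : ℝ)) L' → Majorizes L' (fun _ : Fin (n + 1) => N / n) :=
  TFF_max_one_plus_inv_general n N hn hdvd
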